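/- Suppose there exist C > 0 and ν ≥ 1 such that dist((t ã_0/(2π), …, t ã_m/(2π)), ℤ^{m+1}) ≥ C t^{1−ν} for every real t ≥ 1. Then there exists c > 0 such that for every z ∈ ℂ^{m+1}, every integer k and every real t ≥ 1, Σ_{j=0}^{m} |e^{i a_j t} − e^{2πi k r_j/q_0}|·|z_j| ≥ c · t^{1−ν} · min_{0≤j≤m} |z_j|. -/

import Mathlib

/-!
Put `2π x_j := a_j t - 2π k r_j / q_0` and let `‖x‖ = |x - round x|` be the distance to the
nearest integer. Jordan's inequality gives `|e^{i a_j t} - e^{2π i k r_j / q_0}| ≥ 4 ‖x_j‖`.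
On the other hand `t ã_0 / 2π = q_0 x_0 + k` and `t ã_j / 2π = x_j - r_j x_0`, so rounding each
`x_j` produces a lattice point within `K ∑ ‖x_j‖` of `(t ã_j / 2π)_j`, with `K` depending only on
`q_0` and the `r_j`. The Diophantine hypothesis thus gives `∑ ‖x_j‖ ≥ C t^{1-ν} / K`.
-/

open scoped Real

def intLattice (m : ℕ) : Set (EuclideanSpace ℝ (Fin (m + 1))) :=
  {w | ∀ j, ∃ n : ℤ, w j = (n : ℝ)}

open Finset

lemma two_mul_abs_sub_round_le_abs_sin_pi_mul (x : ℝ) :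
    2 * |x - round x| ≤ |Real.sin (π * x)| := by
  have hperiodic : Real.sin (π * x) = (-1) ^ round x * Real.sin (π * (x - round x)) := by
    rw [← Real.sin_add_int_mul_pi]; ring_nf
  have hhalf : |π * (x - round x)| ≤ π / 2 := by
    rw [abs_mul, abs_of_pos Real.pi_pos]; nlinarith [abs_sub_round x, Real.pi_pos]
  calc 2 * |x - round x| = 2 / π * |π * (x - round x)| := by
        rw [abs_mul, abs_of_pos Real.pi_pos]; field_simp
    _ ≤ |Real.sin (π * (x - round x))| := Real.mul_abs_le_abs_sin hhalf
    _ = |Real.sin (π * x)| := by rw [hperiodic, abs_mul, abs_neg_one_zpow, one_mul]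

lemma four_mul_abs_sub_round_le_norm_exp_sub_exp (θ φ : ℝ) :
    4 * |(θ - φ) / (2 * π) - round ((θ - φ) / (2 * π))| ≤
      ‖Complex.exp (Complex.I * θ) - Complex.exp (Complex.I * φ)‖ := by
  have hfactor : Complex.exp (Complex.I * θ) - Complex.exp (Complex.I * φ) =
      Complex.exp (Complex.I * φ) * (Complex.exp (Complex.I * ↑(θ - φ)) - 1) := by
    rw [mul_sub, ← Complex.exp_add]; push_cast; ring_nf
  rw [hfactor, norm_mul, Complex.norm_exp_I_mul_ofReal, one_mul,
    Complex.norm_exp_I_mul_ofReal_sub_one, norm_mul, Real.norm_two, Real.norm_eq_abs]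
  have := two_mul_abs_sub_round_le_abs_sin_pi_mul ((θ - φ) / (2 * π))
  rw [show π * ((θ - φ) / (2 * π)) = (θ - φ) / 2 by field_simp] at this
  linarith

lemma EuclideanSpace.norm_le_sum_abs {ι : Type*} [Fintype ι] (v : EuclideanSpace ℝ ι) :
    ‖v‖ ≤ ∑ j, |v j| := by
  rw [EuclideanSpace.norm_eq, Real.sqrt_le_left (by positivity)]
  simpa only [Real.norm_eq_abs] using sum_sq_le_sq_sum_of_nonneg fun j _ => abs_nonneg (v j)

lemma infDist_intLattice_le_sum_abs_sub {m : ℕ} (v : EuclideanSpace ℝ (Fin (m + 1)))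
    {w : EuclideanSpace ℝ (Fin (m + 1))} (hw : w ∈ intLattice m) :
    Metric.infDist v (intLattice m) ≤ ∑ j, |v j - w j| :=
  (Metric.infDist_le_dist_of_mem hw).trans <| by
    simpa [dist_eq_norm] using EuclideanSpace.norm_le_sum_abs (v - w)

lemma sum_le_mul_sum_of_le_add_mul {ι : Type*} [Fintype ι] {e d b : ι → ℝ} (i : ι)
    (h : ∀ j, e j ≤ d j + b j * d i) (hd : ∀ j, 0 ≤ d j) (hb : ∀ j, 0 ≤ b j) :
    ∑ j, e j ≤ (1 + ∑ j, b j) * ∑ j, d j := by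
  have hdi : d i ≤ ∑ j, d j := single_le_sum (fun j _ => hd j) (mem_univ i)
  calc ∑ j, e j ≤ ∑ j, d j + (∑ j, b j) * d i := by
        rw [sum_mul, ← sum_add_distrib]; exact sum_le_sum fun j _ => h j
    _ ≤ ∑ j, d j + (∑ j, b j) * ∑ j, d j := by
        gcongr; exact sum_nonneg fun j _ => hb j
    _ = (1 + ∑ j, b j) * ∑ j, d j := by ring

lemma sum_mul_inf'_le_sum_mul {ι : Type*} [Fintype ι] [Nonempty ι] {e : ι → ℝ}
    (he : ∀ j, 0 ≤ e j) (f : ι → ℝ) :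
    (∑ j, e j) * univ.inf' univ_nonempty f ≤ ∑ j, e j * f j := by
  rw [sum_mul]
  gcongr with j
  · exact he j
  · exact inf'_le _ (mem_univ j)

lemma infDist_intLattice_le_sum_abs_sub_round {m : ℕ} (q0 : ℕ) (r : Fin (m + 1) → ℕ) (k : ℤ)
    (x : Fin (m + 1) → ℝ) (v : EuclideanSpace ℝ (Fin (m + 1)))
    (hv0 : v 0 = q0 * x 0 + k) (hv : ∀ j ≠ 0, v j = x j - r j * x 0) :
    Metric.infDist v (intLattice m) ≤
      (1 + ∑ j, ((q0 : ℝ) + r j)) * ∑ j, |x j - round (x j)| := by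
  set n : Fin (m + 1) → ℤ := fun j => round (x j)
  let w : EuclideanSpace ℝ (Fin (m + 1)) := WithLp.toLp 2 fun j =>
    if j = 0 then ((q0 * n 0 + k : ℤ) : ℝ) else ((n j - r j * n 0 : ℤ) : ℝ)
  have hw : w ∈ intLattice m := by
    intro j
    by_cases hj : j = 0
    · exact ⟨q0 * n 0 + k, by simp [w, hj]⟩
    · exact ⟨n j - r j * n 0, by simp [w, hj]⟩
  have hvw : ∀ j, |v j - w j| ≤ |x j - n j| + (q0 + r j) * |x 0 - n 0| := by
    intro j
    by_cases hj : j = 0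
    · subst hj
      have hdiff : v 0 - w 0 = q0 * (x 0 - n 0) := by simp [w, hv0]; ring
      rw [hdiff, abs_mul, Nat.abs_cast]
      nlinarith [abs_nonneg (x 0 - n 0), (r 0).cast_nonneg (α := ℝ)]
    · have hdiff : v j - w j = (x j - n j) - r j * (x 0 - n 0) := by
        simp [w, hj, hv j hj]; ring
      calc |v j - w j| ≤ |x j - n j| + r j * |x 0 - n 0| := by
            rw [hdiff]; exact (abs_sub _ _).trans_eq (by rw [abs_mul, Nat.abs_cast])
        _ ≤ |x j - n j| + (q0 + r j) * |x 0 - n 0| := by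
            gcongr; exact le_add_of_nonneg_left q0.cast_nonneg
  calc Metric.infDist v (intLattice m) ≤ ∑ j, |v j - w j| :=
        infDist_intLattice_le_sum_abs_sub v hw
    _ ≤ _ := sum_le_mul_sum_of_le_add_mul 0 hvw (fun _ => abs_nonneg _) (fun _ => by positivity)

theorem lens_diophantine_lower_bound_general (m : ℕ) (a : Fin (m + 1) → ℝ)
    (q0 : ℕ) (hq0 : 1 < q0) (r : Fin (m + 1) → ℕ) (hr0 : r 0 = 1)
    (atil : Fin (m + 1) → ℝ) (hatil0 : atil 0 = q0 * a 0)
    (hatil : ∀ j : Fin (m + 1), j ≠ 0 → atil j = a j - (r j : ℝ) * a 0)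
    (C ν : ℝ) (hC : 0 < C)
    (hdio : ∀ t : ℝ, 1 ≤ t →
      C * t ^ (1 - ν) ≤ Metric.infDist
        (show EuclideanSpace ℝ (Fin (m + 1)) from WithLp.toLp 2 (fun j => t * atil j / (2 * π)))
        (intLattice m)) :
    ∃ c : ℝ, 0 < c ∧ ∀ z : Fin (m + 1) → ℂ, ∀ k : ℤ, ∀ t : ℝ, 1 ≤ t →
      c * t ^ (1 - ν) * (Finset.univ.inf' Finset.univ_nonempty fun j => ‖z j‖) ≤
        ∑ j, ‖Complex.exp (Complex.I * (a j : ℂ) * (t : ℂ)) -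
          Complex.exp (2 * (π : ℂ) * Complex.I * (k : ℂ) * (r j : ℂ) / (q0 : ℂ))‖ *
          ‖z j‖ := by
  have hq0' : (q0 : ℝ) ≠ 0 := by exact_mod_cast (zero_lt_one.trans hq0).ne'
  set K : ℝ := 1 + ∑ j, ((q0 : ℝ) + r j)
  have hK : 0 < K := by positivity
  refine ⟨4 * C / K, by positivity, fun z k t ht => ?_⟩
  set φ : Fin (m + 1) → ℝ := fun j => 2 * π * k * r j / q0
  set x : Fin (m + 1) → ℝ := fun j => (a j * t - φ j) / (2 * π)
  have hlattice : C * t ^ (1 - ν) ≤ K * ∑ j, |x j - round (x j)| :=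
    (hdio t ht).trans <| infDist_intLattice_le_sum_abs_sub_round q0 r k x _
      (by simp [x, φ, hatil0, hr0]; field_simp; ring)
      (fun j hj => by simp [x, φ, hatil j hj, hr0]; field_simp; ring)
  set E : Fin (m + 1) → ℝ := fun j => ‖Complex.exp (Complex.I * (a j : ℂ) * (t : ℂ)) -
    Complex.exp (2 * (π : ℂ) * Complex.I * (k : ℂ) * (r j : ℂ) / (q0 : ℂ))‖
  have hexp : ∀ j, 4 * |x j - round (x j)| ≤ E j := fun j => by
    have hθ : Complex.I * (a j : ℂ) * (t : ℂ) = Complex.I * ↑(a j * t) := by push_cast; ring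
    have hφ : 2 * (π : ℂ) * Complex.I * (k : ℂ) * (r j : ℂ) / (q0 : ℂ) = Complex.I * ↑(φ j) := by
      simp only [φ]; push_cast; ring
    simpa only [E, hθ, hφ] using four_mul_abs_sub_round_le_norm_exp_sub_exp (a j * t) (φ j)
  set μ := univ.inf' univ_nonempty fun j => ‖z j‖
  have hμ : 0 ≤ μ := le_inf' _ _ fun j _ => norm_nonneg _
  calc 4 * C / K * t ^ (1 - ν) * μ ≤ (4 * ∑ j, |x j - round (x j)|) * μ := by
        refine mul_le_mul_of_nonneg_right ?_ hμ
        rw [div_mul_eq_mul_div, div_le_iff₀ hK]; linarith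
    _ ≤ (∑ j, E j) * μ := by gcongr; rw [mul_sum]; exact sum_le_sum fun j _ => hexp j
    _ ≤ ∑ j, E j * ‖z j‖ := sum_mul_inf'_le_sum_mul (fun j => norm_nonneg _) _

/-- in the lens space setting (`r 0 = 1`, `r j = q_j` for `j ≥ 1`,
`ã_0 = q_0 a_0`, `ã_j = a_j - q_j a_0`), if `(ã_0,…,ã_m)` satisfies the
Diophantine bound `dist((t ã_j/(2π))_j, ℤ^{m+1}) ≥ C t^{1-ν}` for all `t ≥ 1`,
then there is `c > 0` such that for all `z ∈ ℂ^{m+1}`, `k ∈ ℤ`, `t ≥ 1`,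
`∑_j |e^{i a_j t} - e^{2πi k r_j/q_0}| |z_j| ≥ c t^{1-ν} min_j |z_j|`. -/
theorem lens_diophantine_lower_bound (m : ℕ) (hm : 1 ≤ m)
    (a : Fin (m + 1) → ℝ) (ha : ∀ j, 0 < a j)
    (q0 : ℕ) (hq0 : 1 < q0) (r : Fin (m + 1) → ℕ) (hr0 : r 0 = 1)
    (atil : Fin (m + 1) → ℝ) (hatil0 : atil 0 = q0 * a 0)
    (hatil : ∀ j : Fin (m + 1), j ≠ 0 → atil j = a j - (r j : ℝ) * a 0)
    (C ν : ℝ) (hC : 0 < C) (hν : 1 ≤ ν)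
    (hdio : ∀ t : ℝ, 1 ≤ t →
      C * t ^ (1 - ν) ≤ Metric.infDist
        (show EuclideanSpace ℝ (Fin (m + 1)) from WithLp.toLp 2 (fun j => t * atil j / (2 * π)))
        (intLattice m)) :
    ∃ c : ℝ, 0 < c ∧ ∀ z : Fin (m + 1) → ℂ, ∀ k : ℤ, ∀ t : ℝ, 1 ≤ t →
      c * t ^ (1 - ν) * (Finset.univ.inf' Finset.univ_nonempty fun j => ‖z j‖) ≤
        ∑ j, ‖Complex.exp (Complex.I * (a j : ℂ) * (t : ℂ)) -
          Complex.exp (2 * (π : ℂ) * Complex.I * (k : ℂ) * (r j : ℂ) / (q0 : ℂ))‖ *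
          ‖z j‖ :=
  lens_diophantine_lower_bound_general m a q0 hq0 r hr0 atil hatil0 hatil C ν hC hdio
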